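/- arXiv:2306.16830 — 4 statements merged into one kernel-verified Lean document; each statement's English description precedes it below -/
import Mathlib

section
/- With tanh activation ψ, weight w = s₁(x^{(2)}−x^{(1)})/‖x^{(2)}−x^{(1)}‖² and bias b = ⟨w, x^{(1)}⟩ + s₂ where s₂ = ln(3)/2 and s₁ = 2s₂, the neuron n(x) = ψ(⟨w,x⟩ − b) satisfies n(x^{(1)}) = −1/2, n(x^{(2)}) = 1/2, and n((x^{(1)}+x^{(2)})/2) = 0. -/
/-!
The pre-activation `⟪w, x⟫ - b` equals `⟪w, x - x1⟫ - s₂`, and `w` is scaled so that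
`⟪w, x2 - x1⟫ = s₁ = 2 s₂`. Hence at `x1`, at the midpoint and at `x2` the neuron evaluates
`tanh` at `-s₂`, `0` and `s₂`, and `s₂ = log 3 / 2 = artanh (1/2)`.
-/

open Real

lemma Real.artanh_one_half : artanh (1 / 2) = log 3 / 2 := by
  rw [artanh_eq_half_log (by norm_num)]
  norm_num
  ring

lemma Real.tanh_log_three_div_two : tanh (log 3 / 2) = 1 / 2 := by
  rw [← artanh_one_half, tanh_artanh (by norm_num)]

lemma real_inner_smul_div_norm_sq_self {E : Type*} [NormedAddCommGroup E] [InnerProductSpace ℝ E]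
    {v : E} (hv : v ≠ 0) (s : ℝ) : inner ℝ ((s / ‖v‖ ^ 2) • v) v = s := by
  rw [real_inner_smul_left, real_inner_self_eq_norm_sq]
  field_simp [norm_ne_zero_iff.mpr hv]

theorem tanh_sampled_neuron_values {D : ℕ}
    (x1 x2 : EuclideanSpace ℝ (Fin D)) (hx : x1 ≠ x2)
    (s₁ s₂ : ℝ) (hs₂ : s₂ = Real.log 3 / 2) (hs₁ : s₁ = 2 * s₂)
    (w : EuclideanSpace ℝ (Fin D)) (hw : w = (s₁ / ‖x2 - x1‖ ^ 2) • (x2 - x1))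
    (b : ℝ) (hb : b = (inner ℝ w x1 : ℝ) + s₂)
    (n : EuclideanSpace ℝ (Fin D) → ℝ) (hn : ∀ x, n x = Real.tanh ((inner ℝ w x : ℝ) - b)) :
    n x1 = -(1/2) ∧ n x2 = 1/2 ∧ n ((1/2 : ℝ) • (x1 + x2)) = 0 := by
  have hn' : ∀ x, n x = tanh (inner ℝ w (x - x1) - s₂) := fun x ↦ by
    rw [hn, hb, inner_sub_right, sub_sub]
  have hstep : inner ℝ w (x2 - x1) = 2 * s₂ := by
    rw [hw, real_inner_smul_div_norm_sq_self (sub_ne_zero.mpr hx.symm), hs₁]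
  have hmid : (1 / 2 : ℝ) • (x1 + x2) - x1 = (1 / 2 : ℝ) • (x2 - x1) := by module
  have htanh : tanh s₂ = 1 / 2 := hs₂ ▸ tanh_log_three_div_two
  refine ⟨?_, ?_, ?_⟩
  · rw [hn', sub_self, inner_zero_right, zero_sub, tanh_neg, htanh]
  · rw [hn', hstep, two_mul, add_sub_cancel_right, htanh]
  · rw [hn', hmid, real_inner_smul_right, hstep]
    simp
end

section
/- Let X ⊂ R^D with X' ⊂ X as in the noisy input space construction (X the ε_I-neighborhood of a compact set X' with reach τ > ε_I > 0). Let v be a unit vector and let x* ∈ X achieve the minimum of ⟨v, x⟩ over X. Then x* ∈ ∂X, and ζ(x*) − x* = c·v for some c > 0, where ζ(x*) is the unique nearest point of x* in X'. -/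
open Metric

/-- The medial axis of a set `A`: points with at least two distinct nearest points in `A`. -/
def medialAxis {E : Type*} [NormedAddCommGroup E] (A : Set E) : Set E :=
  {z | ∃ p ∈ A, ∃ q ∈ A, p ≠ q ∧ dist p z = infDist z A ∧ dist q z = infDist z A}

/-- The reach of a set `A`: the infimum over `a ∈ A` of the distance to the medial axis. -/
noncomputable def reach {E : Type*} [NormedAddCommGroup E] (A : Set E) : ℝ :=
  sInf ((fun a => infDist a (medialAxis A)) '' A)

section InnerProductSpace

variable {E : Type*} [NormedAddCommGroup E] [InnerProductSpace ℝ E]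

theorem notMem_interior_of_isMinOn_inner {s : Set E} {v x : E} (hv : v ≠ 0)
    (hmin : IsMinOn (inner ℝ v) s x) : x ∉ interior s := by
  intro hx
  have hderiv := (hmin.isLocalMin (mem_interior_iff_mem_nhds.mp hx)).fderiv_eq_zero
  rw [show (inner ℝ v : E → ℝ) = innerSL ℝ v from rfl, ContinuousLinearMap.fderiv] at hderiv
  exact hv (by simpa using congrArg (· v) hderiv)

theorem eq_norm_smul_of_norm_le_inner {v y : E} (hv : ‖v‖ = 1) (h : ‖y‖ ≤ inner ℝ v y) :
    y = ‖y‖ • v := by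
  have hcs := real_inner_le_norm v y
  have heq : inner ℝ v y = ‖v‖ * ‖y‖ := by rw [hv] at hcs ⊢; linarith
  simpa [hv] using (inner_eq_norm_mul_iff_real.mp heq).symm

end InnerProductSpace

section Thickening

variable {α : Type*} [PseudoMetricSpace α]

theorem infDist_eq_of_notMem_interior {A : Set α} {ε : ℝ} {x : α}
    (hx : infDist x A ≤ ε) (hint : x ∉ interior {y | infDist y A ≤ ε}) : infDist x A = ε := by
  refine hx.antisymm (not_lt.mp fun hlt => hint ?_)
  exact interior_maximal (fun y hy => le_of_lt hy)
    (isOpen_lt (continuous_infDist_pt A) continuous_const) hlt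

end Thickening

theorem linear_minimizer_on_boundary_general {D : ℕ} (X' X : Set (EuclideanSpace ℝ (Fin D)))
    (εI : ℝ) (hεpos : 0 < εI)
    (hX : X = {x | infDist x X' ≤ εI})
    (ζ : EuclideanSpace ℝ (Fin D) → EuclideanSpace ℝ (Fin D))
    (hζmem : ∀ x ∈ X, ζ x ∈ X')
    (hζdist : ∀ x ∈ X, dist x (ζ x) = infDist x X')
    (v : EuclideanSpace ℝ (Fin D)) (hv : ‖v‖ = 1)
    (xstar : EuclideanSpace ℝ (Fin D)) (hxstar : xstar ∈ X)
    (hmin : ∀ x ∈ X, (inner ℝ v xstar : ℝ) ≤ (inner ℝ v x : ℝ)) :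
    xstar ∈ frontier X ∧ ∃ c : ℝ, 0 < c ∧ ζ xstar - xstar = c • v := by
  have hnotint : xstar ∉ interior X :=
    notMem_interior_of_isMinOn_inner (norm_ne_zero_iff.mp (hv ▸ one_ne_zero)) hmin
  have hclosed : IsClosed X := hX ▸ isClosed_le (continuous_infDist_pt X') continuous_const
  refine ⟨hclosed.frontier_eq ▸ ⟨hxstar, hnotint⟩, εI, hεpos, ?_⟩
  have hnorm : ‖ζ xstar - xstar‖ = εI := by
    subst hX
    rw [← dist_eq_norm, dist_comm, hζdist _ hxstar, infDist_eq_of_notMem_interior hxstar hnotint]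
  -- Stepping from `ζ xstar` a distance `εI` against `v` stays in `X`, so minimality of `xstar`
  -- forces equality in Cauchy–Schwarz for `⟪v, ζ xstar - xstar⟫`.
  have hstep : ζ xstar - εI • v ∈ X := by
    rw [hX]
    calc infDist (ζ xstar - εI • v) X' ≤ dist (ζ xstar - εI • v) (ζ xstar) :=
          infDist_le_dist_of_mem (hζmem _ hxstar)
      _ = εI := by simp [norm_smul, abs_of_pos hεpos, hv]
  have hle := hmin _ hstep
  rw [inner_sub_right, real_inner_smul_right, real_inner_self_eq_norm_mul_norm, hv] at hle
  have hdir := eq_norm_smul_of_norm_le_inner hv (y := ζ xstar - xstar)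
    (by rw [hnorm, inner_sub_right]; linarith)
  rwa [hnorm] at hdir

theorem linear_minimizer_on_boundary {D : ℕ} (X' X : Set (EuclideanSpace ℝ (Fin D)))
    (hne : X'.Nonempty) (hcomp : IsCompact X')
    (τ εI : ℝ) (hτ : reach X' = τ) (hεpos : 0 < εI) (hετ : εI < τ)
    (hX : X = {x | infDist x X' ≤ εI})
    (ζ : EuclideanSpace ℝ (Fin D) → EuclideanSpace ℝ (Fin D))
    (hζmem : ∀ x ∈ X, ζ x ∈ X')
    (hζdist : ∀ x ∈ X, dist x (ζ x) = infDist x X')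
    (hζuniq : ∀ x ∈ X, ∀ y ∈ X', dist x y = infDist x X' → y = ζ x)
    (v : EuclideanSpace ℝ (Fin D)) (hv : ‖v‖ = 1)
    (xstar : EuclideanSpace ℝ (Fin D)) (hxstar : xstar ∈ X)
    (hmin : ∀ x ∈ X, (inner ℝ v xstar : ℝ) ≤ (inner ℝ v x : ℝ)) :
    xstar ∈ frontier X ∧ ∃ c : ℝ, 0 < c ∧ ζ xstar - xstar = c • v :=
  linear_minimizer_on_boundary_general X' X εI hεpos hX ζ hζmem hζdist v hv xstar hxstar hmin
end

section
/- For any continuous g : X → R^m on a compact noisy input space X (the ε_I-neighborhood of a compact set of positive reach) and any ε > 0, there exists a sampled network Φ with one hidden layer of ReLU neurons — hidden weights of the form w_i = (x_i^{(2)}−x_i^{(1)})/‖x_i^{(2)}−x_i^{(1)}‖² with x_i^{(1)} ≠ x_i^{(2)} ∈ X, biases b_i = ⟨w_i, x_i^{(1)}⟩, and arbitrary linear output layer — such that sup_{x∈X} ‖g(x) − Φ(x)‖ < ε. -/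
open Metric

set_option maxHeartbeats 1000000

open Finset

lemma filter_eq_range_card (N : ℕ) (Q : ℕ → Prop) [DecidablePred Q]
    (hQ : ∀ i j, i ≤ j → j < N → Q j → Q i) :
    (Finset.range N).filter Q = Finset.range (((Finset.range N).filter Q).card) := by
  ext i
  simp only [Finset.mem_filter, Finset.mem_range]
  constructor
  · rintro ⟨hiN, hQi⟩
    have hsub : Finset.range (i+1) ⊆ (Finset.range N).filter Q := by
      intro j hj
      simp only [Finset.mem_range] at hj
      have hji : j ≤ i := Nat.lt_succ_iff.mp hj
      exact Finset.mem_filter.mpr ⟨Finset.mem_range.mpr (lt_of_le_of_lt hji hiN),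
        hQ j i hji hiN hQi⟩
    have := Finset.card_le_card hsub
    simpa using this
  · intro hi
    have hcard : ((Finset.range N).filter Q).card ≤ N := by
      simpa using Finset.card_le_card (Finset.filter_subset Q (Finset.range N))
    have hiN : i < N := lt_of_lt_of_le hi hcard
    refine ⟨hiN, ?_⟩
    by_contra hQi
    have hsub : (Finset.range N).filter Q ⊆ Finset.range i := by
      intro j hj
      simp only [Finset.mem_filter, Finset.mem_range] at hj ⊢
      by_contra hji
      push_neg at hji
      exact hQi (hQ i j hji hj.1 hj.2)
    have := Finset.card_le_card hsub
    simp only [Finset.card_range] at this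
    omega

lemma max_sub_max_neg (a : ℝ) : max a 0 - max (-a) 0 = a := by
  rcases le_total a 0 with h | h
  · rw [max_eq_right h, max_eq_left (by linarith)]; ring
  · rw [max_eq_left h, max_eq_right (by linarith)]; ring

/-- Piecewise linear (chordal) approximation by ReLU combinations. -/
lemma pl_approx (φ : ℝ → ℝ) (M : ℝ)
    (hφ : ∀ a b : ℝ, |φ a - φ b| ≤ M * |a - b|)
    (n : ℕ) (hn : 1 ≤ n) (k : ℕ → ℝ) (hk : ∀ i, i < n → k i < k (i+1)) :
    ∃ (c : ℕ → ℝ) (cneg C : ℝ), ∀ t : ℝ, ∀ i, i ≤ n →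
      |C + cneg * max (k 0 - t) 0 + (∑ j ∈ Finset.range n, c j * max (t - k j) 0) - φ t|
        ≤ 2 * M * |t - k i| := by
  have hM : 0 ≤ M := by
    have := hφ 0 1
    have h1 : (0:ℝ) ≤ |φ 0 - φ 1| := abs_nonneg _
    simp only [abs_of_nonneg, zero_sub, abs_neg, abs_one, mul_one] at this
    linarith [abs_nonneg (φ 0 - φ 1)]
  -- slopes
  set s : ℕ → ℝ := fun i => (φ (k (i+1)) - φ (k i)) / (k (i+1) - k i) with hs
  set L : ℕ → ℝ → ℝ := fun i t => φ (k i) + s i * (t - k i) with hL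
  have hkmono : ∀ i j, i ≤ j → j ≤ n → k i ≤ k j := by
    intro i j hij hjn
    induction j with
    | zero => rw [Nat.le_zero.mp hij]
    | succ j ih =>
      rcases Nat.lt_succ_iff_lt_or_eq.mp (Nat.lt_succ_of_le hij) with h | h
      · exact le_trans (ih (by omega) (by omega)) (le_of_lt (hk j (by omega)))
      · exact le_of_eq (by rw [h])
  have hkne : ∀ i, i < n → k (i+1) - k i ≠ 0 := fun i hi => ne_of_gt (by linarith [hk i hi])
  have hchord : ∀ i, i < n → φ (k i) + s i * (k (i+1) - k i) = φ (k (i+1)) := by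
    intro i hi
    rw [hs]
    rw [div_mul_cancel₀ _ (hkne i hi)]
    ring
  have hsM : ∀ i, i < n → |s i| ≤ M := by
    intro i hi
    rw [hs, abs_div]
    rw [div_le_iff₀ (abs_pos.mpr (hkne i hi))]
    calc |φ (k (i+1)) - φ (k i)| ≤ M * |k (i+1) - k i| := hφ _ _
    _ = M * |k (i+1) - k i| := rfl
  -- endpoint estimate
  have hEP : ∀ j t, j < n → (|L j t - φ t| ≤ 2 * M * |t - k j| ∧ |L j t - φ t| ≤ 2 * M * |t - k (j+1)|) := by
    intro j t hj
    have hbase : ∀ e : ℝ, L j e = φ e → |L j t - φ t| ≤ 2 * M * |t - e| := by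
      intro e he
      have h1 : |L j t - L j e| = |s j| * |t - e| := by
        rw [hL]; simp only
        rw [show φ (k j) + s j * (t - k j) - (φ (k j) + s j * (e - k j)) = s j * (t - e) by ring] at *
        exact abs_mul _ _
      calc |L j t - φ t| ≤ |L j t - L j e| + |φ e - φ t| := by
            rw [he] at *
            have := abs_sub_le (L j t) (φ e) (φ t)
            simpa using this
        _ ≤ |s j| * |t - e| + M * |e - t| := add_le_add (le_of_eq h1) (hφ e t)
        _ ≤ M * |t - e| + M * |t - e| := by
            rw [abs_sub_comm e t]
            exact add_le_add (mul_le_mul_of_nonneg_right (hsM j hj) (abs_nonneg _)) le_rfl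
        _ = 2 * M * |t - e| := by ring
    constructor
    · exact hbase (k j) (by rw [hL]; simp)
    · exact hbase (k (j+1)) (by rw [hL]; simp only; rw [hchord j hj])
  -- coefficients
  refine ⟨fun i => if i = 0 then s 0 else s i - s (i-1), -(s 0), φ (k 0), ?_⟩
  intro t i hi
  -- compute the value of the approximant
  set Q : ℕ → Prop := fun j => k (j+1) ≤ t with hQ
  have hQdec : DecidablePred Q := fun j => Real.decidableLE _ _
  set J := ((Finset.range (n-1)).filter Q).card with hJ
  have hfil : (Finset.range (n-1)).filter Q = Finset.range J :=
    filter_eq_range_card (n-1) Q (by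
      intro a b hab hbn hQb
      exact le_trans (hkmono (a+1) (b+1) (by omega) (by omega)) hQb)
  have hJle : J ≤ n - 1 := by
    rw [hJ]
    simpa using Finset.card_le_card (Finset.filter_subset Q (Finset.range (n-1)))
  have hJlt : J < n := by omega
  -- A t = L J t
  have hval : φ (k 0) + (-(s 0)) * max (k 0 - t) 0 +
      (∑ j ∈ Finset.range n, (if j = 0 then s 0 else s j - s (j-1)) * max (t - k j) 0) = L J t := by
    have hsplit : (∑ j ∈ Finset.range n, (if j = 0 then s 0 else s j - s (j-1)) * max (t - k j) 0)
        = (∑ j ∈ Finset.range (n-1), (s (j+1) - s j) * max (t - k (j+1)) 0) + s 0 * max (t - k 0) 0 := by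
      obtain ⟨n', rfl⟩ : ∃ n', n = n' + 1 := ⟨n - 1, by omega⟩
      rw [Finset.sum_range_succ' (fun j => (if j = 0 then s 0 else s j - s (j-1)) * max (t - k j) 0) n']
      simp
    rw [hsplit]
    have hrelu : (∑ j ∈ Finset.range (n-1), (s (j+1) - s j) * max (t - k (j+1)) 0)
        = ∑ j ∈ Finset.range J, (L (j+1) t - L j t) := by
      rw [← hfil]
      rw [Finset.sum_filter]
      apply Finset.sum_congr rfl
      intro j hj
      simp only [Finset.mem_range] at hj
      by_cases h : Q j
      · rw [if_pos h]
        have : max (t - k (j+1)) 0 = t - k (j+1) := max_eq_left (by rw [hQ] at h; linarith)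
        rw [this, hL]
        simp only
        have hphi : φ (k j) = φ (k (j+1)) - s j * (k (j+1) - k j) := by
          have := hchord j (by omega); linarith
        rw [hphi]; ring
      · rw [if_neg h]
        have : max (t - k (j+1)) 0 = 0 := max_eq_right (by rw [hQ] at h; push_neg at h; linarith)
        rw [this, mul_zero]
    rw [hrelu, Finset.sum_range_sub (fun j => L j t) J]
    have hmm : -(s 0) * max (k 0 - t) 0 + s 0 * max (t - k 0) 0 = s 0 * (t - k 0) := by
      have h2 := max_sub_max_neg (t - k 0)
      rw [show -(t - k 0) = k 0 - t by ring] at h2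
      calc -(s 0) * max (k 0 - t) 0 + s 0 * max (t - k 0) 0
          = s 0 * (max (t - k 0) 0 - max (k 0 - t) 0) := by ring
        _ = s 0 * (t - k 0) := by rw [h2]
    rw [hL]
    simp only
    linarith [hmm]
  rw [hval]
  -- case analysis
  rcases le_or_gt i J with hiJ | hiJ
  · -- use endpoint k J ; need |t - k J| ≤ |t - k i|
    rcases Nat.eq_or_lt_of_le hiJ with h | h
    · rw [h]; exact (hEP J t hJlt).1
    · -- i < J so J ≥ 1, k J ≤ t
      have hkJ : k J ≤ t := by
        have : J - 1 ∈ Finset.range J := by simp; omega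
        rw [← hfil] at this
        have := (Finset.mem_filter.mp this).2
        rw [hQ] at this
        simpa [show J - 1 + 1 = J by omega] using this
      have hki : k i ≤ k J := hkmono i J (le_of_lt h) (by omega)
      have h1 : |t - k J| ≤ |t - k i| := by
        rw [abs_of_nonneg (by linarith), abs_of_nonneg (by linarith)]; linarith
      exact le_trans ((hEP J t hJlt).1) (by nlinarith [abs_nonneg (t - k i)])
  · -- J < i : endpoint k (J+1), |t - k (J+1)| ≤ |t - k i|
    rcases Nat.eq_or_lt_of_le (Nat.succ_le_of_lt hiJ) with h | h
    · rw [← h]; exact (hEP J t hJlt).2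
    · -- i > J + 1 ⇒ J ∈ range (n-1) and J ∉ filter ⇒ t < k (J+1)
      have hJr : J < n - 1 := by omega
      have hJnot : J ∉ (Finset.range (n-1)).filter Q := by
        rw [hfil]; simp
      have hQJ : ¬ Q J := by
        intro h'
        exact hJnot (Finset.mem_filter.mpr ⟨Finset.mem_range.mpr hJr, h'⟩)
      rw [hQ] at hQJ
      push_neg at hQJ
      have hki : k (J+1) ≤ k i := hkmono (J+1) i (by omega) hi
      have h1 : |t - k (J+1)| ≤ |t - k i| := by
        rw [abs_of_nonpos (by linarith), abs_of_nonpos (by linarith)]; linarith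
      exact le_trans ((hEP J t hJlt).2) (by nlinarith [abs_nonneg (t - k (J+1))])

noncomputable section

variable {D m : ℕ}

abbrev Evec (D : ℕ) := EuclideanSpace ℝ (Fin D)

def netFun {D m N : ℕ} (x1 x2 : Fin N → Evec D) (W2 : Fin N → Evec m) (b2 : Evec m)
    (x : Evec D) : Evec m :=
  (∑ i, max ((inner ℝ ((‖x2 i - x1 i‖ ^ 2)⁻¹ • (x2 i - x1 i)) (x - x1 i) : ℝ)) 0 • W2 i) - b2

def IsRep (X : Set (Evec D)) (F : Evec D → Evec m) : Prop :=
  ∃ (N : ℕ) (x1 x2 : Fin N → Evec D) (W2 : Fin N → Evec m) (b2 : Evec m),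
    (∀ i, x1 i ∈ X ∧ x2 i ∈ X ∧ x1 i ≠ x2 i) ∧ ∀ x ∈ X, F x = netFun x1 x2 W2 b2 x

lemma rep_const (X : Set (Evec D)) (v : Evec m) : IsRep X (fun _ => v) := by
  refine ⟨0, Fin.elim0, Fin.elim0, Fin.elim0, -v, fun i => i.elim0, fun x _ => ?_⟩
  simp [netFun]

lemma rep_add {X : Set (Evec D)} {F G : Evec D → Evec m} (hF : IsRep X F) (hG : IsRep X G) :
    IsRep X (fun x => F x + G x) := by
  obtain ⟨N1, a1, a2, aW, ab, ha, hFx⟩ := hF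
  obtain ⟨N2, b1, b2, bW, bb, hb, hGx⟩ := hG
  refine ⟨N1 + N2, Fin.append a1 b1, Fin.append a2 b2, Fin.append aW bW, ab + bb, ?_, ?_⟩
  · intro i
    refine Fin.addCases (fun j => ?_) (fun j => ?_) i
    · simpa [Fin.append_left] using ha j
    · simpa [Fin.append_right] using hb j
  · intro x hx
    show F x + G x = _
    rw [hFx x hx, hGx x hx]
    simp only [netFun]
    rw [Fin.sum_univ_add]
    simp only [Fin.append_left, Fin.append_right]
    abel

lemma rep_neuron {X : Set (Evec D)} {x1 x2 : Evec D} (h1 : x1 ∈ X) (h2 : x2 ∈ X)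
    (hne : x1 ≠ x2) (v : Evec m) :
    IsRep X (fun x =>
      max ((inner ℝ ((‖x2 - x1‖ ^ 2)⁻¹ • (x2 - x1)) (x - x1) : ℝ)) 0 • v) := by
  refine ⟨1, fun _ => x1, fun _ => x2, fun _ => v, 0, fun _ => ⟨h1, h2, hne⟩, fun x _ => ?_⟩
  simp [netFun]

def CanApprox (X : Set (Evec D)) (F : Evec D → Evec m) : Prop :=
  ∀ ε : ℝ, 0 < ε → ∃ G, IsRep X G ∧ ∀ x ∈ X, ‖F x - G x‖ ≤ ε

lemma can_of_rep {X : Set (Evec D)} {F : Evec D → Evec m} (h : IsRep X F) : CanApprox X F :=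
  fun ε hε => ⟨F, h, fun x _ => by simp [le_of_lt hε]⟩

lemma can_add {X : Set (Evec D)} {F G : Evec D → Evec m}
    (hF : CanApprox X F) (hG : CanApprox X G) : CanApprox X (fun x => F x + G x) := by
  intro ε hε
  obtain ⟨F', hF', hFe⟩ := hF (ε/2) (by linarith)
  obtain ⟨G', hG', hGe⟩ := hG (ε/2) (by linarith)
  refine ⟨fun x => F' x + G' x, rep_add hF' hG', fun x hx => ?_⟩
  have : F x + G x - (F' x + G' x) = (F x - F' x) + (G x - G' x) := by abel
  rw [this]
  calc ‖(F x - F' x) + (G x - G' x)‖ ≤ ‖F x - F' x‖ + ‖G x - G' x‖ := norm_add_le _ _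
    _ ≤ ε/2 + ε/2 := add_le_add (hFe x hx) (hGe x hx)
    _ = ε := by ring

lemma can_limit {X : Set (Evec D)} {F : Evec D → Evec m}
    (h : ∀ ε : ℝ, 0 < ε → ∃ G, CanApprox X G ∧ ∀ x ∈ X, ‖F x - G x‖ ≤ ε) :
    CanApprox X F := by
  intro ε hε
  obtain ⟨G, hG, hGe⟩ := h (ε/2) (by linarith)
  obtain ⟨G', hG', hGe'⟩ := hG (ε/2) (by linarith)
  refine ⟨G', hG', fun x hx => ?_⟩
  calc ‖F x - G' x‖ ≤ ‖F x - G x‖ + ‖G x - G' x‖ := by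
        have : F x - G' x = (F x - G x) + (G x - G' x) := by abel
        rw [this]; exact norm_add_le _ _
    _ ≤ ε/2 + ε/2 := add_le_add (hGe x hx) (hGe' x hx)
    _ = ε := by ring

lemma can_sum {X : Set (Evec D)} {ι : Type*} (s : Finset ι) (F : ι → Evec D → Evec m)
    (h : ∀ i ∈ s, CanApprox X (F i)) : CanApprox X (fun x => ∑ i ∈ s, F i x) := by
  classical
  induction s using Finset.induction with
  | empty => simpa using can_of_rep (rep_const X (0 : Evec m))
  | insert _ _ hni ih =>
    rename_i a s'
    have h1 : CanApprox X (F a) := h a (Finset.mem_insert_self a s')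
    have h2 : CanApprox X (fun x => ∑ i ∈ s', F i x) := ih (fun i hi => h i (Finset.mem_insert_of_mem hi))
    have := can_add h1 h2
    intro ε hε
    obtain ⟨G', hrep, herr⟩ := this ε hε
    refine ⟨G', hrep, fun x hx => ?_⟩
    have hs : ∑ i ∈ insert a s', F i x = F a x + ∑ i ∈ s', F i x := Finset.sum_insert hni
    show ‖(∑ i ∈ insert a s', F i x) - G' x‖ ≤ ε
    rw [hs]
    exact herr x hx

lemma rep_ridge {X : Set (Evec D)} {w : Evec D} (hw : w ≠ 0) {q : Evec D} {r εI : ℝ}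
    (hmem : ∀ t : ℝ, |t| ≤ εI → q + (t/‖w‖) • w ∈ X) (hr1 : -εI ≤ r) (hr2 : r < εI)
    (c : ℝ) (v : Evec m) :
    IsRep X (fun x => (c * max ((inner ℝ w x : ℝ) - ((inner ℝ w q : ℝ) + r * ‖w‖)) 0) • v) := by
  have hwn : (0:ℝ) < ‖w‖ := norm_pos_iff.mpr hw
  set γ : ℝ := (εI - r)/‖w‖ with hγdef
  have hγ : 0 < γ := div_pos (by linarith) hwn
  set x1 : Evec D := q + (r/‖w‖) • w with hx1
  set x2 : Evec D := q + (εI/‖w‖) • w with hx2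
  have hd : x2 - x1 = γ • w := by
    rw [hx1, hx2, hγdef]
    rw [sub_div, sub_smul]
    abel
  have h1X : x1 ∈ X := hmem r (by rw [abs_le]; constructor <;> linarith)
  have h2X : x2 ∈ X := hmem εI (by rw [abs_le]; constructor <;> linarith)
  have hne : x1 ≠ x2 := by
    intro h
    have : x2 - x1 = 0 := by rw [h]; abel
    rw [hd] at this
    exact hw (by simpa [smul_eq_zero, ne_of_gt hγ] using this)
  have hnorm : ‖x2 - x1‖^2 = γ^2 * ‖w‖^2 := by
    rw [hd, norm_smul]
    simp [abs_of_pos hγ]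
    ring
  have hinner1 : (inner ℝ w x1 : ℝ) = (inner ℝ w q : ℝ) + r * ‖w‖ := by
    rw [hx1, inner_add_right, real_inner_smul_right, real_inner_self_eq_norm_sq]
    field_simp
  obtain ⟨Nrep, a1, a2, aW, ab, hmem', heq⟩ :=
    rep_neuron (m := m) h1X h2X hne ((c * γ * ‖w‖^2) • v)
  refine ⟨Nrep, a1, a2, aW, ab, hmem', fun x hx => ?_⟩
  rw [← heq x hx]
  show (c * max ((inner ℝ w x : ℝ) - ((inner ℝ w q : ℝ) + r * ‖w‖)) 0) • v
      = (max ((inner ℝ ((‖x2 - x1‖ ^ 2)⁻¹ • (x2 - x1)) (x - x1) : ℝ)) 0) • ((c * γ * ‖w‖^2) • v)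
  have hsc : (inner ℝ ((‖x2 - x1‖ ^ 2)⁻¹ • (x2 - x1)) (x - x1) : ℝ)
      = (γ * ‖w‖^2)⁻¹ * ((inner ℝ w x : ℝ) - ((inner ℝ w q : ℝ) + r * ‖w‖)) := by
    rw [real_inner_smul_left, hnorm, hd, real_inner_smul_left, inner_sub_right, hinner1]
    field_simp
  rw [hsc]
  have hpos : (0:ℝ) ≤ (γ * ‖w‖^2)⁻¹ := by positivity
  rw [show max ((γ * ‖w‖^2)⁻¹ * ((inner ℝ w x : ℝ) - ((inner ℝ w q : ℝ) + r * ‖w‖))) 0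
      = (γ * ‖w‖^2)⁻¹ * max ((inner ℝ w x : ℝ) - ((inner ℝ w q : ℝ) + r * ‖w‖)) 0 by
    rw [mul_max_of_nonneg _ _ hpos, mul_zero]]
  rw [smul_smul]
  congr 1
  have : (γ * ‖w‖^2) ≠ 0 := by positivity
  field_simp

lemma rep_sum {X : Set (Evec D)} {ι : Type*} (s : Finset ι) (F : ι → Evec D → Evec m)
    (h : ∀ i ∈ s, IsRep X (F i)) : IsRep X (fun x => ∑ i ∈ s, F i x) := by
  classical
  induction s using Finset.induction with
  | empty => simpa using rep_const X (0 : Evec m)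
  | insert _ _ hni ih =>
    rename_i a s'
    have h2 := rep_add (h a (Finset.mem_insert_self a s'))
      (ih (fun i hi => h i (Finset.mem_insert_of_mem hi)))
    obtain ⟨N, a1, a2, aW, ab, hm, heq⟩ := h2
    refine ⟨N, a1, a2, aW, ab, hm, fun x hx => ?_⟩
    rw [← heq x hx]
    show ∑ i ∈ insert a s', F i x = F a x + ∑ i ∈ s', F i x
    exact Finset.sum_insert hni

lemma exp_clamp_lip (B : ℝ) (a b : ℝ) :
    |Real.exp (min a B) - Real.exp (min b B)| ≤ Real.exp B * |a - b| := by
  have key : ∀ x y : ℝ, x ≤ y → y ≤ B → Real.exp y - Real.exp x ≤ Real.exp B * (y - x) := by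
    intro x y hxy hyB
    have h1 : (x - y) + 1 ≤ Real.exp (x - y) := Real.add_one_le_exp _
    have h2 : Real.exp y - Real.exp x = Real.exp y * (1 - Real.exp (x - y)) := by
      rw [mul_sub, mul_one, ← Real.exp_add]
      ring_nf
    rw [h2]
    have h3 : 1 - Real.exp (x - y) ≤ y - x := by linarith
    have h4 : Real.exp y ≤ Real.exp B := Real.exp_le_exp.mpr hyB
    nlinarith [Real.exp_pos y, Real.exp_pos (x - y), Real.exp_nonneg y, sub_nonneg.mpr hxy]
  have hmin : |min a B - min b B| ≤ |a - b| := by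
    have := abs_min_sub_min_le_max a B b B
    simpa using this
  rcases le_total (min a B) (min b B) with h | h
  · rw [abs_sub_comm, abs_of_nonneg (by simp [Real.exp_le_exp.mpr h, sub_nonneg])]
    calc Real.exp (min b B) - Real.exp (min a B) ≤ Real.exp B * (min b B - min a B) :=
          key _ _ h (min_le_right _ _)
      _ ≤ Real.exp B * |a - b| := by
          have h5 : min b B - min a B ≤ |a - b| := by
            calc min b B - min a B ≤ |min b B - min a B| := le_abs_self _
              _ = |min a B - min b B| := abs_sub_comm _ _
              _ ≤ |a - b| := hmin
          exact mul_le_mul_of_nonneg_left h5 (Real.exp_nonneg B)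
  · rw [abs_of_nonneg (by simp [Real.exp_le_exp.mpr h, sub_nonneg])]
    calc Real.exp (min a B) - Real.exp (min b B) ≤ Real.exp B * (min a B - min b B) :=
          key _ _ h (min_le_right _ _)
      _ ≤ Real.exp B * |a - b| := by
          have h5 : min a B - min b B ≤ |a - b| := le_trans (le_abs_self _) hmin
          exact mul_le_mul_of_nonneg_left h5 (Real.exp_nonneg B)

lemma can_exp_ridge {X' X : Set (Evec D)} (hne : X'.Nonempty) (hcomp : IsCompact X')
    {εI : ℝ} (hεpos : 0 < εI) (hX : X = {x | Metric.infDist x X' ≤ εI})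
    {C : ℝ} (hC : ∀ x ∈ X, ‖x‖ ≤ C) (w : Evec D) (v : Evec m) :
    CanApprox X (fun x => Real.exp (inner ℝ w x : ℝ) • v) := by
  classical
  by_cases hw : w = 0
  · subst hw
    have : (fun x : Evec D => Real.exp (inner ℝ (0 : Evec D) x : ℝ) • v) = fun _ => (1:ℝ) • v := by
      funext x
      rw [inner_zero_left, Real.exp_zero]
    rw [this]
    exact can_of_rep (rep_const X ((1:ℝ) • v))
  intro ε hε
  have hwn : (0:ℝ) < ‖w‖ := norm_pos_iff.mpr hw
  have hX'X : X' ⊆ X := by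
    intro p hp
    rw [hX]
    simpa [Metric.infDist_zero_of_mem hp] using le_of_lt hεpos
  have hmemX : ∀ q ∈ X', ∀ t : ℝ, |t| ≤ εI → q + (t/‖w‖) • w ∈ X := by
    intro q hq t ht
    rw [hX]
    refine le_trans (Metric.infDist_le_dist_of_mem hq) ?_
    rw [dist_eq_norm]
    have : q + (t/‖w‖) • w - q = (t/‖w‖) • w := by abel
    rw [this, norm_smul, norm_div, Real.norm_eq_abs, Real.norm_eq_abs, abs_of_pos hwn]
    rw [div_mul_cancel₀ _ (ne_of_gt hwn)]
    exact ht
  obtain ⟨x0, hx0⟩ := hne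
  have hC0 : 0 ≤ C := le_trans (norm_nonneg x0) (hC x0 (hX'X hx0))
  set B : ℝ := ‖w‖ * C with hB
  set M : ℝ := Real.exp B with hMdef
  have hM : 0 < M := Real.exp_pos B
  set φ : ℝ → ℝ := fun t => Real.exp (min t B) with hφ
  have hφlip : ∀ a b : ℝ, |φ a - φ b| ≤ M * |a - b| := fun a b => exp_clamp_lip B a b
  have hφeq : ∀ x ∈ X, φ (inner ℝ w x : ℝ) = Real.exp (inner ℝ w x : ℝ) := by
    intro x hx
    have hle : (inner ℝ w x : ℝ) ≤ B := by
      calc (inner ℝ w x : ℝ) ≤ |(inner ℝ w x : ℝ)| := le_abs_self _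
        _ ≤ ‖w‖ * ‖x‖ := abs_real_inner_le_norm w x
        _ ≤ ‖w‖ * C := mul_le_mul_of_nonneg_left (hC x hx) (le_of_lt hwn)
    simp only [hφ]
    rw [min_eq_left hle]
  -- choose ρ
  set K : ℝ := 6 * M * ‖w‖ * (1 + ‖v‖) with hK
  have hKpos : 0 < K := by positivity
  set ρ : ℝ := min (εI/2) (ε / (1 + K)) with hρdef
  have hρ : 0 < ρ := lt_min (by linarith) (by positivity)
  have hρεI : ρ ≤ εI/2 := min_le_left _ _
  have hρε : ρ * K ≤ ε := by
    have h1 : ρ ≤ ε / (1 + K) := min_le_right _ _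
    have h2 : ρ * (1 + K) ≤ ε := by
      rw [← le_div_iff₀ (by positivity)]
      exact h1
    nlinarith
  have hεIρ : 0 < εI - ρ := by linarith
  -- nets
  obtain ⟨Q0, hQ0sub, hQ0fin, hQ0cov⟩ := finite_cover_balls_of_compact hcomp hρ
  obtain ⟨R0, hR0sub, hR0fin, hR0cov⟩ :=
    finite_cover_balls_of_compact (isCompact_Icc (a := -(εI - ρ)) (b := εI - ρ)) hρ
  set Qf : Finset (Evec D) := hQ0fin.toFinset with hQf
  set Rf : Finset ℝ := hR0fin.toFinset ∪ {-(εI - ρ), εI - ρ} with hRf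
  have hQfsub : ∀ q ∈ Qf, q ∈ X' := by
    intro q hq
    rw [hQf, Set.Finite.mem_toFinset] at hq
    exact hQ0sub hq
  have hRfsub : ∀ r ∈ Rf, -(εI - ρ) ≤ r ∧ r ≤ εI - ρ := by
    intro r hr
    rw [hRf, Finset.mem_union] at hr
    rcases hr with hr | hr
    · rw [Set.Finite.mem_toFinset] at hr
      exact Set.mem_Icc.mp (hR0sub hr)
    · simp only [Finset.mem_insert, Finset.mem_singleton] at hr
      rcases hr with rfl | rfl
      · constructor <;> linarith
      · constructor <;> linarith
  -- the knot set
  set F : Finset ℝ := (Qf ×ˢ Rf).image (fun p => (inner ℝ w p.1 : ℝ) + p.2 * ‖w‖) with hF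
  obtain ⟨q0, hq0⟩ : ∃ q, q ∈ Qf := by
    obtain ⟨q, hq, _⟩ := Set.mem_iUnion₂.mp (hQ0cov hx0)
    exact ⟨q, by rw [hQf, Set.Finite.mem_toFinset]; exact hq⟩
  have hmemRf1 : -(εI - ρ) ∈ Rf := by rw [hRf]; simp
  have hmemRf2 : (εI - ρ) ∈ Rf := by rw [hRf]; simp
  have hF2 : 1 < F.card := by
    rw [Finset.one_lt_card]
    refine ⟨(inner ℝ w q0 : ℝ) + (-(εI - ρ)) * ‖w‖, ?_, (inner ℝ w q0 : ℝ) + (εI - ρ) * ‖w‖, ?_, ?_⟩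
    · rw [hF]; exact Finset.mem_image.mpr ⟨(q0, -(εI - ρ)), Finset.mem_product.mpr ⟨hq0, hmemRf1⟩, rfl⟩
    · rw [hF]; exact Finset.mem_image.mpr ⟨(q0, εI - ρ), Finset.mem_product.mpr ⟨hq0, hmemRf2⟩, rfl⟩
    · intro h
      have : (-(εI - ρ)) * ‖w‖ = (εI - ρ) * ‖w‖ := by linarith
      nlinarith
  set l : List ℝ := F.sort (· ≤ ·) with hl
  have hlen : l.length = F.card := Finset.length_sort _
  set n : ℕ := l.length - 1 with hn'
  have hn : 1 ≤ n := by omega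
  have hlenn : l.length = n + 1 := by omega
  set k : ℕ → ℝ := fun i => l.getD i 0 with hkdef
  have hgetk : ∀ i (h : i < l.length), k i = l.get ⟨i, h⟩ := by
    intro i h
    simp only [hkdef]
    rw [List.getD_eq_getElem l 0 h, List.get_eq_getElem]
  have hk : ∀ i, i < n → k i < k (i+1) := by
    intro i hi
    have h1 : i < l.length := by omega
    have h2 : i + 1 < l.length := by omega
    rw [hgetk i h1, hgetk (i+1) h2]
    exact (Finset.sortedLT_sort F).strictMono_get (by simp)
  have hkF : ∀ i, i ≤ n → k i ∈ F := by
    intro i hi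
    have h1 : i < l.length := by omega
    have hmem : k i ∈ l := by
      rw [hgetk i h1]
      exact List.get_mem l ⟨i, h1⟩
    rw [hl] at hmem
    exact (Finset.mem_sort (α := ℝ) (· ≤ ·)).mp hmem
  have hFk : ∀ b ∈ F, ∃ i ≤ n, k i = b := by
    intro b hb
    have : b ∈ l := by rw [hl, Finset.mem_sort]; exact hb
    obtain ⟨idx, hidx⟩ := List.mem_iff_get.mp this
    exact ⟨idx.1, by omega, by rw [hgetk idx.1 idx.2]; simpa using hidx⟩
  -- coverage
  have hcover : ∀ x ∈ X, ∃ i ≤ n, |(inner ℝ w x : ℝ) - k i| ≤ 3 * ρ * ‖w‖ := by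
    intro x hx
    obtain ⟨p, hp, hdist⟩ := hcomp.exists_infDist_eq_dist ⟨x0, hx0⟩ x
    have hdp : dist x p ≤ εI := by
      rw [← hdist]
      rw [hX] at hx
      exact hx
    obtain ⟨q, hqQ0, hqball⟩ := Set.mem_iUnion₂.mp (hQ0cov hp)
    have hqX' : q ∈ X' := hQ0sub hqQ0
    have hqQf : q ∈ Qf := by rw [hQf, Set.Finite.mem_toFinset]; exact hqQ0
    have hpq : dist p q < ρ := Metric.mem_ball.mp hqball
    have hxq : dist x q ≤ εI + ρ :=
      le_trans (dist_triangle x p q) (by linarith)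
    set u : ℝ := ((inner ℝ w x : ℝ) - (inner ℝ w q : ℝ)) / ‖w‖ with hu
    have hub : |u| ≤ εI + ρ := by
      rw [hu, abs_div, abs_of_pos hwn, div_le_iff₀ hwn]
      have h1 : (inner ℝ w x : ℝ) - (inner ℝ w q : ℝ) = (inner ℝ w (x - q) : ℝ) := by
        rw [inner_sub_right]
      rw [h1]
      calc |(inner ℝ w (x - q) : ℝ)| ≤ ‖w‖ * ‖x - q‖ := abs_real_inner_le_norm w (x - q)
        _ ≤ ‖w‖ * (εI + ρ) := by
            refine mul_le_mul_of_nonneg_left ?_ (le_of_lt hwn)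
            rw [← dist_eq_norm]
            exact hxq
        _ = (εI + ρ) * ‖w‖ := by ring
    set u' : ℝ := max (-(εI - ρ)) (min u (εI - ρ)) with hu'
    have hu'mem : u' ∈ Set.Icc (-(εI - ρ)) (εI - ρ) := by
      constructor
      · exact le_max_left _ _
      · rw [hu']
        refine max_le (by linarith) (min_le_right _ _)
    have huu' : |u - u'| ≤ 2 * ρ := by
      rcases le_total u (εI - ρ) with h1 | h1
      · rcases le_total (-(εI - ρ)) u with h2 | h2
        · have : u' = u := by rw [hu', min_eq_left h1, max_eq_right h2]
          rw [this]
          simp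
          linarith
        · have : u' = -(εI - ρ) := by
            rw [hu', max_eq_left]
            exact le_trans (min_le_left _ _) h2
          rw [this, abs_le]
          have : -(εI + ρ) ≤ u := (abs_le.mp hub).1
          constructor <;> linarith
      · have : u' = εI - ρ := by
          rw [hu', min_eq_right h1, max_eq_right (by linarith)]
        rw [this, abs_le]
        have : u ≤ εI + ρ := (abs_le.mp hub).2
        constructor <;> linarith
    obtain ⟨r, hrR0, hrball⟩ := Set.mem_iUnion₂.mp (hR0cov hu'mem)
    have hrRf : r ∈ Rf := by
      rw [hRf, Finset.mem_union]
      left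
      rw [Set.Finite.mem_toFinset]
      exact hrR0
    have hur : |u' - r| ≤ ρ := le_of_lt (by rw [← Real.dist_eq]; exact Metric.mem_ball.mp hrball)
    have hbF : (inner ℝ w q : ℝ) + r * ‖w‖ ∈ F := by
      rw [hF]
      exact Finset.mem_image.mpr ⟨(q, r), Finset.mem_product.mpr ⟨hqQf, hrRf⟩, rfl⟩
    obtain ⟨i, hi, hki⟩ := hFk _ hbF
    refine ⟨i, hi, ?_⟩
    rw [hki]
    have heq : (inner ℝ w x : ℝ) - ((inner ℝ w q : ℝ) + r * ‖w‖) = (u - r) * ‖w‖ := by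
      rw [hu]
      field_simp
      ring
    rw [heq, abs_mul, abs_of_pos hwn]
    have : |u - r| ≤ 3 * ρ := by
      calc |u - r| ≤ |u - u'| + |u' - r| := abs_sub_le u u' r
        _ ≤ 2 * ρ + ρ := add_le_add huu' hur
        _ = 3 * ρ := by ring
    calc |u - r| * ‖w‖ ≤ (3 * ρ) * ‖w‖ := mul_le_mul_of_nonneg_right this (le_of_lt hwn)
      _ = 3 * ρ * ‖w‖ := by ring
  -- apply pl_approx
  obtain ⟨c, cneg, C0, herr⟩ := pl_approx φ M hφlip n hn k hk
  set Gfun : Evec D → Evec m := fun x =>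
    (C0 + cneg * max (k 0 - (inner ℝ w x : ℝ)) 0 +
      ∑ j ∈ Finset.range n, c j * max ((inner ℝ w x : ℝ) - k j) 0) • v with hGfun
  have hFform : ∀ i, i ≤ n → ∃ q ∈ X', ∃ r : ℝ, -(εI - ρ) ≤ r ∧ r ≤ εI - ρ ∧
      k i = (inner ℝ w q : ℝ) + r * ‖w‖ := by
    intro i hi
    have := hkF i hi
    rw [hF] at this
    obtain ⟨⟨q, r⟩, hqr, hb⟩ := Finset.mem_image.mp this
    obtain ⟨hq, hr⟩ := Finset.mem_product.mp hqr
    obtain ⟨hr1, hr2⟩ := hRfsub r hr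
    exact ⟨q, hQfsub q hq, r, hr1, hr2, hb.symm⟩
  have hrep : IsRep X Gfun := by
    have hdecomp : Gfun = fun x => (C0 • v) + (((cneg * max (k 0 - (inner ℝ w x : ℝ)) 0) • v)
        + ∑ j ∈ Finset.range n, (c j * max ((inner ℝ w x : ℝ) - k j) 0) • v) := by
      funext x
      show (C0 + cneg * max (k 0 - (inner ℝ w x : ℝ)) 0 +
        ∑ j ∈ Finset.range n, c j * max ((inner ℝ w x : ℝ) - k j) 0) • v = _
      rw [add_smul, add_smul, Finset.sum_smul, add_assoc]
    rw [hdecomp]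
    refine rep_add (rep_const X _) (rep_add ?_ (rep_sum _ _ ?_))
    · -- negative-direction ridge for the k 0 term
      obtain ⟨q, hq, r, hr1, hr2, hkq⟩ := hFform 0 (by omega)
      have hmem' : ∀ t : ℝ, |t| ≤ εI → q + (t/‖-w‖) • (-w) ∈ X := by
        intro t ht
        have : q + (t/‖-w‖) • (-w) = q + ((-t)/‖w‖) • w := by
          rw [norm_neg, smul_neg, ← neg_smul, neg_div]
        rw [this]
        exact hmemX q hq (-t) (by rwa [abs_neg])
      have hridge := rep_ridge (X := X) (neg_ne_zero.mpr hw) hmem'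
        (r := -r) (by linarith) (by linarith) cneg v
      have heqfun : (fun x => (cneg * max ((inner ℝ (-w) x : ℝ) -
          ((inner ℝ (-w) q : ℝ) + (-r) * ‖-w‖)) 0) • v)
          = fun x => (cneg * max (k 0 - (inner ℝ w x : ℝ)) 0) • v := by
        funext x
        congr 3
        rw [inner_neg_left, inner_neg_left, norm_neg, hkq]
        ring
      rw [← heqfun]
      exact hridge
    · intro j hj
      obtain ⟨q, hq, r, hr1, hr2, hkq⟩ := hFform j (le_of_lt (by simpa using Finset.mem_range.mp hj))
      have hridge := rep_ridge (X := X) hw (hmemX q hq) (r := r) (by linarith) (by linarith) (c j) v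
      have heqfun : (fun x => ((c j) * max ((inner ℝ w x : ℝ) -
          ((inner ℝ w q : ℝ) + r * ‖w‖)) 0) • v)
          = fun x => ((c j) * max ((inner ℝ w x : ℝ) - k j) 0) • v := by
        funext x
        rw [hkq]
      rw [← heqfun]
      exact hridge
  refine ⟨Gfun, hrep, fun x hx => ?_⟩
  obtain ⟨i, hi, hnear⟩ := hcover x hx
  have herr2 := herr (inner ℝ w x : ℝ) i hi
  rw [hφeq x hx] at herr2
  have hGsub : Real.exp (inner ℝ w x : ℝ) • v - Gfun x
      = (Real.exp (inner ℝ w x : ℝ) - (C0 + cneg * max (k 0 - (inner ℝ w x : ℝ)) 0 +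
        ∑ j ∈ Finset.range n, c j * max ((inner ℝ w x : ℝ) - k j) 0)) • v := by
    rw [hGfun, sub_smul]
  rw [hGsub, norm_smul, Real.norm_eq_abs, abs_sub_comm]
  calc |C0 + cneg * max (k 0 - (inner ℝ w x : ℝ)) 0 +
        ∑ j ∈ Finset.range n, c j * max ((inner ℝ w x : ℝ) - k j) 0 - Real.exp (inner ℝ w x : ℝ)| * ‖v‖
      ≤ (2 * M * |(inner ℝ w x : ℝ) - k i|) * ‖v‖ :=
        mul_le_mul_of_nonneg_right herr2 (norm_nonneg v)
    _ ≤ (2 * M * (3 * ρ * ‖w‖)) * ‖v‖ := by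
        refine mul_le_mul_of_nonneg_right (mul_le_mul_of_nonneg_left hnear (by positivity)) (norm_nonneg v)
    _ ≤ ρ * K := by rw [hK]; nlinarith [norm_nonneg v, le_of_lt hM, le_of_lt hρ, le_of_lt hwn]
    _ ≤ ε := hρε

lemma span_exp_dense {D : ℕ} {X : Set (Evec D)} (hXc : IsCompact X)
    (f : C(X, ℝ)) (ε : ℝ) (hε : 0 < ε) :
    ∃ (NN : ℕ) (a : Fin NN → ℝ) (ws : Fin NN → Evec D),
      ∀ x : X, |f x - ∑ i, a i * Real.exp ((inner ℝ (ws i) (x : Evec D)) : ℝ)| ≤ ε := by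
  haveI : CompactSpace X := isCompact_iff_compactSpace.mp hXc
  set expC : Evec D → C(X, ℝ) := fun w =>
    ⟨fun x => Real.exp ((inner ℝ w (x : Evec D)) : ℝ),
      Real.continuous_exp.comp (Continuous.inner continuous_const continuous_subtype_val)⟩
    with hexpC
  set S : Set C(X,ℝ) := Set.range expC with hS
  set V : Submodule ℝ C(X,ℝ) := Submodule.span ℝ S with hV
  have hmulS : ∀ w1 w2, expC w1 * expC w2 = expC (w1 + w2) := by
    intro w1 w2
    ext x
    show Real.exp _ * Real.exp _ = Real.exp _
    rw [← Real.exp_add, inner_add_left]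
  have h1 : (1 : C(X,ℝ)) ∈ V := by
    have h0 : expC 0 = 1 := by
      ext x
      show Real.exp _ = 1
      rw [inner_zero_left, Real.exp_zero]
    rw [← h0]
    exact Submodule.subset_span ⟨0, rfl⟩
  have hmul : ∀ x y : C(X,ℝ), x ∈ V → y ∈ V → x*y ∈ V := by
    intro x y hx hy
    refine Submodule.span_induction₂ (p := fun a b _ _ => a * b ∈ V)
      ?_ ?_ ?_ ?_ ?_ ?_ ?_ hx hy
    · rintro a b ⟨w1, rfl⟩ ⟨w2, rfl⟩
      rw [hmulS]
      exact Submodule.subset_span ⟨w1 + w2, rfl⟩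
    · intro y _
      rw [zero_mul]; exact V.zero_mem
    · intro x _
      rw [mul_zero]; exact V.zero_mem
    · intro a b z _ _ _ h1' h2'
      rw [add_mul]; exact V.add_mem h1' h2'
    · intro a b z _ _ _ h1' h2'
      rw [mul_add]; exact V.add_mem h1' h2'
    · intro r a b _ _ h'
      rw [smul_mul_assoc]; exact V.smul_mem r h'
    · intro r a b _ _ h'
      rw [mul_smul_comm]; exact V.smul_mem r h'
  set A : Subalgebra ℝ C(X,ℝ) := V.toSubalgebra h1 hmul with hA
  have hsep : A.SeparatesPoints := by
    intro x y hxy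
    have hd : (x : Evec D) - (y : Evec D) ≠ 0 := by
      intro h
      exact hxy (Subtype.ext (by rwa [sub_eq_zero] at h))
    refine ⟨(expC ((x : Evec D) - (y : Evec D)) : X → ℝ),
      ⟨expC ((x : Evec D) - (y : Evec D)), Submodule.subset_span ⟨_, rfl⟩, rfl⟩, ?_⟩
    show Real.exp _ ≠ Real.exp _
    rw [Ne, Real.exp_eq_exp]
    intro h
    have : (inner ℝ ((x : Evec D) - (y : Evec D)) ((x : Evec D) - (y : Evec D)) : ℝ) = 0 := by
      rw [inner_sub_right, h, sub_self]
    rw [inner_self_eq_zero] at this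
    exact hd this
  have hdense := ContinuousMap.subalgebra_topologicalClosure_eq_top_of_separatesPoints A hsep
  have hfmem : f ∈ closure (A : Set C(X,ℝ)) := by
    rw [← Subalgebra.topologicalClosure_coe, hdense]
    trivial
  obtain ⟨p, hpA, hdist⟩ := Metric.mem_closure_iff.mp hfmem ε hε
  have hpV : p ∈ V := hpA
  obtain ⟨NN, a, gsub, hsum⟩ := Submodule.mem_span_set'.mp hpV
  choose ws hws using fun i => (gsub i).2
  refine ⟨NN, a, ws, fun x => ?_⟩
  have hpx : p x = ∑ i, a i * Real.exp ((inner ℝ (ws i) (x : Evec D)) : ℝ) := by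
    rw [← hsum]
    rw [ContinuousMap.sum_apply]
    apply Finset.sum_congr rfl
    intro i _
    rw [ContinuousMap.smul_apply]
    rw [smul_eq_mul]
    congr 1
    rw [← hws i]
    rfl
  rw [← hpx]
  have := ContinuousMap.dist_apply_le_dist (f := f) (g := p) x
  rw [Real.dist_eq] at this
  exact le_of_lt (lt_of_le_of_lt this hdist)

lemma can_g {D m : ℕ} {X' X : Set (Evec D)} (hne : X'.Nonempty) (hcomp : IsCompact X')
    {εI : ℝ} (hεpos : 0 < εI) (hX : X = {x | Metric.infDist x X' ≤ εI})
    (hXc : IsCompact X) {C : ℝ} (hC : ∀ x ∈ X, ‖x‖ ≤ C)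
    (g : Evec D → Evec m) (hg : ContinuousOn g X) :
    CanApprox X g := by
  classical
  have hTj : ∀ j : Fin m, CanApprox X (fun x => (g x j) • (EuclideanSpace.single j (1:ℝ))) := by
    intro j
    apply can_limit
    intro ε'' hε''
    set gj : C(X, ℝ) := ⟨fun x => g (x : Evec D) j,
      (EuclideanSpace.proj j).continuous.comp hg.restrict⟩ with hgj
    obtain ⟨NN, a, ws, hsw⟩ := span_exp_dense hXc gj (ε''/2) (by linarith)
    set combo : Evec D → Evec m := fun x =>
      ∑ i, (Real.exp ((inner ℝ (ws i) x) : ℝ)) • ((a i) • EuclideanSpace.single j (1:ℝ))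
      with hcombo
    have hcomboCan : CanApprox X combo := by
      apply can_sum
      intro i _
      exact can_exp_ridge hne hcomp hεpos hX hC (ws i) _
    refine ⟨combo, hcomboCan, fun x hx => ?_⟩
    have hcx : combo x = (∑ i, a i * Real.exp ((inner ℝ (ws i) x) : ℝ)) •
        EuclideanSpace.single j (1:ℝ) := by
      rw [hcombo]
      rw [Finset.sum_smul]
      apply Finset.sum_congr rfl
      intro i _
      rw [smul_smul, mul_comm]
    rw [hcx]
    have hdiff : (g x j) • EuclideanSpace.single j (1:ℝ) -
        (∑ i, a i * Real.exp ((inner ℝ (ws i) x) : ℝ)) • EuclideanSpace.single j (1:ℝ)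
        = (g x j - ∑ i, a i * Real.exp ((inner ℝ (ws i) x) : ℝ)) • EuclideanSpace.single j (1:ℝ) := by
      rw [sub_smul]
    rw [hdiff, norm_smul, Real.norm_eq_abs, EuclideanSpace.norm_single, norm_one, mul_one]
    have := hsw ⟨x, hx⟩
    calc |g x j - ∑ i, a i * Real.exp ((inner ℝ (ws i) x) : ℝ)| ≤ ε''/2 := this
      _ ≤ ε'' := by linarith
  have hsum := can_sum (Finset.univ) (fun j => fun x => (g x j) • (EuclideanSpace.single j (1:ℝ)))
    (fun j _ => hTj j)
  have hgeq : ∀ x : Evec D, (∑ j, (g x j) • EuclideanSpace.single j (1:ℝ)) = g x := by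
    intro x
    have h := (EuclideanSpace.basisFun (Fin m) ℝ).sum_repr (g x)
    conv_rhs => rw [← h]
    apply Finset.sum_congr rfl
    intro i _
    rw [EuclideanSpace.basisFun_apply]
    rfl
  intro ε hε
  obtain ⟨G, hrep, herr⟩ := hsum ε hε
  refine ⟨G, hrep, fun x hx => ?_⟩
  have h2 : ‖(∑ j, (g x j) • EuclideanSpace.single j (1:ℝ)) - G x‖ ≤ ε := herr x hx
  rwa [hgeq x] at h2


theorem sampled_networks_universal {D m : ℕ} (X' X : Set (EuclideanSpace ℝ (Fin D)))
    (hne : X'.Nonempty) (hcomp : IsCompact X')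
    (τ εI : ℝ) (hτ : reach X' = τ) (hεpos : 0 < εI) (hεlt : εI < min τ 1)
    (hX : X = {x | infDist x X' ≤ εI})
    (g : EuclideanSpace ℝ (Fin D) → EuclideanSpace ℝ (Fin m)) (hg : ContinuousOn g X)
    (ε : ℝ) (hε : 0 < ε) :
    ∃ (N : ℕ) (x1 x2 : Fin N → EuclideanSpace ℝ (Fin D))
      (W2 : Fin N → EuclideanSpace ℝ (Fin m)) (b2 : EuclideanSpace ℝ (Fin m)),
      (∀ i, x1 i ∈ X ∧ x2 i ∈ X ∧ x1 i ≠ x2 i) ∧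
      ∀ x ∈ X,
        ‖g x - ((∑ i, max ((inner ℝ ((‖x2 i - x1 i‖ ^ 2)⁻¹ • (x2 i - x1 i))
            (x - x1 i) : ℝ)) 0 • W2 i) - b2)‖ < ε := by
  obtain ⟨x0, hx0⟩ := hne
  have hXcl : IsClosed X := by
    rw [hX]
    exact isClosed_le (Metric.continuous_infDist_pt X') continuous_const
  obtain ⟨R, hR⟩ := hcomp.isBounded.subset_closedBall x0
  have hXsub : X ⊆ Metric.closedBall x0 (εI + R) := by
    intro x hx
    obtain ⟨p, hp, hdist⟩ := hcomp.exists_infDist_eq_dist ⟨x0, hx0⟩ x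
    have h1 : dist x p ≤ εI := by
      rw [← hdist]
      rw [hX] at hx
      exact hx
    have h2 : dist p x0 ≤ R := Metric.mem_closedBall.mp (hR hp)
    exact Metric.mem_closedBall.mpr (le_trans (dist_triangle x p x0) (by linarith))
  have hXbd : Bornology.IsBounded X :=
    (Metric.isBounded_closedBall).subset hXsub
  have hXc : IsCompact X := Metric.isCompact_of_isClosed_isBounded hXcl hXbd
  have hCex : ∀ x ∈ X, ‖x‖ ≤ ‖x0‖ + (εI + R) := by
    intro x hx
    have := Metric.mem_closedBall.mp (hXsub hx)
    calc ‖x‖ ≤ ‖x0‖ + dist x x0 := by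
          rw [dist_eq_norm]
          calc ‖x‖ = ‖x0 + (x - x0)‖ := by congr 1; abel
            _ ≤ ‖x0‖ + ‖x - x0‖ := norm_add_le _ _
      _ ≤ ‖x0‖ + (εI + R) := by linarith
  have hcan := can_g ⟨x0, hx0⟩ hcomp hεpos hX hXc hCex g hg
  obtain ⟨G, ⟨N, x1, x2, W2, b2, hmem, hGeq⟩, herr⟩ := hcan (ε/2) (by linarith)
  refine ⟨N, x1, x2, W2, b2, hmem, fun x hx => ?_⟩
  have hnet : ((∑ i, max ((inner ℝ ((‖x2 i - x1 i‖ ^ 2)⁻¹ • (x2 i - x1 i))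
      (x - x1 i) : ℝ)) 0 • W2 i) - b2) = netFun x1 x2 W2 b2 x := rfl
  rw [hnet, ← hGeq x hx]
  exact lt_of_le_of_lt (herr x hx) (by linarith)
end
end

section
/- Composition of first layers commutes with transformations: let H(x) = aAx + c with a ≠ 0, A ∈ O(D), c ∈ R^D. If two one-hidden-layer sampled feature maps Φ^{(1)} on X and Φ̂^{(1)} on H(X), each with N₁ neurons and the same activation φ, are built from point pairs related by x̂_i^{(j)} = H(x_i^{(j)}) for j = 1,2 and all i (with weights s₁(x^{(2)}−x^{(1)})/‖x^{(2)}−x^{(1)}‖² and biases ⟨w, x^{(1)}⟩ + s₂), then Φ^{(1)}(x) = Φ̂^{(1)}(H(x)) for all x ∈ X. -/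
/-!
The affine map `H x = a • A x + c` sends a difference `q - p` to `a • A (q - p)`, so the weight
built from `H p, H q` is `a⁻¹ • A w`, where `w` is the weight built from `p, q`. The factors `a⁻¹`
and `a` cancel in the inner product with `H x - H p = a • A (x - p)`, and `A` preserves inner
products, so every pre-activation `⟪w, x - p⟫ - s₂` is unchanged. When `p = q` both weights
are `0`, as `s / 0 = 0`.
-/

open RealInnerProductSpace

section Similarity

variable {E : Type*} [NormedAddCommGroup E] [InnerProductSpace ℝ E]

theorem similarity_sub {F : Type*} [FunLike F E E] [AddMonoidHomClass F E E] (a : ℝ) (A : F)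
    (c x y : E) :
    (a • A x + c) - (a • A y + c) = a • A (x - y) := by
  rw [map_sub, smul_sub, add_sub_add_right_eq_sub]

variable {a : ℝ} (A : E →ₗᵢ[ℝ] E)

theorem sampledWeight_similarity (ha : a ≠ 0) (s : ℝ) (c p q : E) :
    (s / ‖(a • A q + c) - (a • A p + c)‖ ^ 2) • ((a • A q + c) - (a • A p + c))
      = a⁻¹ • A ((s / ‖q - p‖ ^ 2) • (q - p)) := by
  rw [similarity_sub, norm_smul, A.norm_map,
    mul_pow, Real.norm_eq_abs, sq_abs, map_smul, smul_smul, smul_smul]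
  congr 1
  field_simp

theorem inner_inv_smul_map_smul_map (ha : a ≠ 0) (v y : E) : ⟪a⁻¹ • A v, a • A y⟫ = ⟪v, y⟫ := by
  rw [real_inner_smul_left, real_inner_smul_right, A.inner_map_map, inv_mul_cancel_left₀ ha]

end Similarity

theorem first_layer_commutes_with_transformation_general {D N₁ : ℕ}
    (X : Set (EuclideanSpace ℝ (Fin D)))
    (a : ℝ) (ha : a ≠ 0) (A : EuclideanSpace ℝ (Fin D) ≃ₗᵢ[ℝ] EuclideanSpace ℝ (Fin D))
    (c : EuclideanSpace ℝ (Fin D))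
    (H : EuclideanSpace ℝ (Fin D) → EuclideanSpace ℝ (Fin D)) (hH : ∀ x, H x = a • A x + c)
    (s₁ s₂ : ℝ) (φ : ℝ → ℝ)
    (x1 x2 : Fin N₁ → EuclideanSpace ℝ (Fin D))
    (xh1 xh2 : Fin N₁ → EuclideanSpace ℝ (Fin D))
    (hxh1 : ∀ i, xh1 i = H (x1 i)) (hxh2 : ∀ i, xh2 i = H (x2 i))
    (w : Fin N₁ → EuclideanSpace ℝ (Fin D))
    (hw : ∀ i, w i = (s₁ / ‖x2 i - x1 i‖ ^ 2) • (x2 i - x1 i))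
    (b : Fin N₁ → ℝ) (hb : ∀ i, b i = (inner ℝ (w i) (x1 i) : ℝ) + s₂)
    (wh : Fin N₁ → EuclideanSpace ℝ (Fin D))
    (hwh : ∀ i, wh i = (s₁ / ‖xh2 i - xh1 i‖ ^ 2) • (xh2 i - xh1 i))
    (bh : Fin N₁ → ℝ) (hbh : ∀ i, bh i = (inner ℝ (wh i) (xh1 i) : ℝ) + s₂)
    (Φ Φh : EuclideanSpace ℝ (Fin D) → Fin N₁ → ℝ)
    (hΦ : ∀ x i, Φ x i = φ ((inner ℝ (w i) x : ℝ) - b i))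
    (hΦh : ∀ x i, Φh x i = φ ((inner ℝ (wh i) x : ℝ) - bh i)) :
    ∀ x ∈ X, Φ x = Φh (H x) := by
  intro x _
  funext i
  have hwh_eq : wh i = a⁻¹ • A (w i) := by
    rw [hwh, hxh1, hxh2, hH, hH, hw]
    exact sampledWeight_similarity A.toLinearIsometry ha s₁ c (x1 i) (x2 i)
  have hdiff : H x - xh1 i = a • A (x - x1 i) := by
    rw [hxh1, hH, hH, similarity_sub]
  rw [hΦ, hΦh, hb, hbh, sub_add_eq_sub_sub, sub_add_eq_sub_sub, ← inner_sub_right,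
    ← inner_sub_right, hdiff, hwh_eq]
  congr 2
  exact (inner_inv_smul_map_smul_map A.toLinearIsometry ha (w i) (x - x1 i)).symm

theorem first_layer_commutes_with_transformation {D N₁ : ℕ}
    (X : Set (EuclideanSpace ℝ (Fin D)))
    (a : ℝ) (ha : a ≠ 0) (A : EuclideanSpace ℝ (Fin D) ≃ₗᵢ[ℝ] EuclideanSpace ℝ (Fin D))
    (c : EuclideanSpace ℝ (Fin D))
    (H : EuclideanSpace ℝ (Fin D) → EuclideanSpace ℝ (Fin D)) (hH : ∀ x, H x = a • A x + c)
    (s₁ s₂ : ℝ) (φ : ℝ → ℝ)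
    (x1 x2 : Fin N₁ → EuclideanSpace ℝ (Fin D)) (hx : ∀ i, x1 i ≠ x2 i)
    (xh1 xh2 : Fin N₁ → EuclideanSpace ℝ (Fin D))
    (hxh1 : ∀ i, xh1 i = H (x1 i)) (hxh2 : ∀ i, xh2 i = H (x2 i))
    (w : Fin N₁ → EuclideanSpace ℝ (Fin D))
    (hw : ∀ i, w i = (s₁ / ‖x2 i - x1 i‖ ^ 2) • (x2 i - x1 i))
    (b : Fin N₁ → ℝ) (hb : ∀ i, b i = (inner ℝ (w i) (x1 i) : ℝ) + s₂)
    (wh : Fin N₁ → EuclideanSpace ℝ (Fin D))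
    (hwh : ∀ i, wh i = (s₁ / ‖xh2 i - xh1 i‖ ^ 2) • (xh2 i - xh1 i))
    (bh : Fin N₁ → ℝ) (hbh : ∀ i, bh i = (inner ℝ (wh i) (xh1 i) : ℝ) + s₂)
    (Φ Φh : EuclideanSpace ℝ (Fin D) → Fin N₁ → ℝ)
    (hΦ : ∀ x i, Φ x i = φ ((inner ℝ (w i) x : ℝ) - b i))
    (hΦh : ∀ x i, Φh x i = φ ((inner ℝ (wh i) x : ℝ) - bh i)) :
    ∀ x ∈ X, Φ x = Φh (H x) :=
  first_layer_commutes_with_transformation_general X a ha A c H hH s₁ s₂ φ x1 x2 xh1 xh2 hxh1 hxh2 w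
    hw b hb wh hwh bh hbh Φ Φh hΦ hΦh
end
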